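/- Let F be a finite field, S an F-vector space, and (U, V) a tiling of S such that U is projective. Suppose u_1, …, u_N are nonzero vectors of S, no two of which are proportional, such that U = ⋃_{i=1}^N F·u_i. Define the linear map h : F^N → S by h(c) = Σ_{i=1}^N c_i u_i and set C = h^{-1}(V). Let W = span(U), r = dim W, and V_U = V ∩ W. Then dim(ker(C)) = dim(ker(V_U)) + N − r, and |per(C)| = |per(V_U)| · |F|^{N − r}. -/

import Mathlib

/-- `(U, V)` is a tiling of the ambient space `S`: every element of `S` is uniquely
represented as the sum of an element of `U` and an element of `V`. -/
def IsTiling {S : Type*} [AddCommGroup S] (U V : Set S) : Prop :=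
  ∀ s : S, ∃! p : S × S, p.1 ∈ U ∧ p.2 ∈ V ∧ p.1 + p.2 = s

/-- `U` is projective: `F·U = U`, i.e. `U` is closed under scalar multiplication. -/
def IsProjective (F : Type*) {S : Type*} [Field F] [AddCommGroup S] [Module F S]
    (U : Set S) : Prop :=
  ∀ (a : F) ⦃u : S⦄, u ∈ U → a • u ∈ U

/-- The set of periods of `X`: vectors `w` with `X + w = X`. -/
def periods {S : Type*} [AddCommGroup S] (X : Set S) : Set S :=
  {w | (fun v => v + w) '' X = X}

/-- The kernel of `X` (as a set): vectors all of whose scalar multiples are periods of `X`.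
This is the maximal `F`-subspace contained in `periods X`. -/
def kerSet (F : Type*) {S : Type*} [Field F] [AddCommGroup S] [Module F S]
    (X : Set S) : Set S :=
  {w | ∀ a : F, a • w ∈ periods X}

/-- The dimension of the kernel of `X` (the kernel set is a subspace, so spanning it
does not change it). -/
noncomputable def kerDim (F : Type*) {S : Type*} [Field F] [AddCommGroup S] [Module F S]
    (X : Set S) : ℕ :=
  Module.finrank F (Submodule.span F (kerSet F X))

/-!
Let `h : F^N → S` be the linear map `c ↦ ∑ cᵢ uᵢ`, so `C = h⁻¹(V)` and `h(F^N) = W`. Since `h`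
is additive, `w` is a period of `C` exactly when `h w` is a period of `V ∩ W`; as the tiling
forces `V ∩ W ≠ ∅`, all periods of `V ∩ W` lie in `W`. Hence `ker C` is the full preimage of
`ker(V ∩ W) ⊆ W` under `h`, and `per C` the full preimage of `per(V ∩ W)`, and both claims follow
from the fact that every fibre of `h` over `W` is a coset of `ker h`, a space of dimension
`N - r`.
-/

section Periods

variable {G : Type*} [AddCommGroup G]

lemma mem_periods_iff {X : Set G} {w : G} : w ∈ periods X ↔ ∀ x, x ∈ X ↔ x + w ∈ X := by
  refine ⟨fun h x => ?_, fun h => ?_⟩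
  · conv_rhs => rw [← h]
    simp
  · ext y
    refine ⟨?_, fun hy => ⟨y - w, (h (y - w)).2 (by simpa using hy), sub_add_cancel y w⟩⟩
    rintro ⟨x, hx, rfl⟩
    exact (h x).1 hx

lemma zero_mem_periods (X : Set G) : (0 : G) ∈ periods X :=
  mem_periods_iff.2 fun x => by rw [add_zero]

lemma add_mem_periods {X : Set G} {w₁ w₂ : G} (h₁ : w₁ ∈ periods X) (h₂ : w₂ ∈ periods X) :
    w₁ + w₂ ∈ periods X := by
  rw [mem_periods_iff] at *
  intro x
  rw [← add_assoc]
  exact (h₁ x).trans (h₂ (x + w₁))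

lemma periods_subset_of_subset {X : Set G} {H : AddSubgroup G} (hXH : X ⊆ H)
    (hX : X.Nonempty) : periods X ⊆ H := by
  obtain ⟨x, hx⟩ := hX
  intro w hw
  simpa using H.sub_mem (hXH ((mem_periods_iff.1 hw x).1 hx)) (hXH hx)

variable {G' : Type*} [AddCommGroup G']

lemma periods_preimage (f : G →+ G') (X : Set G') :
    periods (f ⁻¹' X) = f ⁻¹' periods (X ∩ Set.range f) := by
  ext w
  have hrange : ∀ y, y + f w ∈ Set.range f ↔ y ∈ Set.range f := fun y =>
    ⟨fun ⟨x, hx⟩ => ⟨x - w, by rw [map_sub, hx, add_sub_cancel_right]⟩,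
      fun ⟨x, hx⟩ => ⟨x + w, by rw [map_add, hx]⟩⟩
  simp only [Set.mem_preimage, mem_periods_iff, Set.mem_inter_iff, map_add]
  refine ⟨fun h y => ?_, fun h x => by simpa [← map_add] using h (f x)⟩
  rw [hrange]
  by_cases hy : y ∈ Set.range f
  · obtain ⟨x, rfl⟩ := hy
    simpa using h x
  · simp [hy]

lemma AddMonoidHom.card_preimage_of_subset_range (f : G →+ G') {A : Set G'}
    (hA : A ⊆ Set.range f) : Nat.card (f ⁻¹' A) = Nat.card A * Nat.card f.ker := by
  set g := QuotientAddGroup.kerLift f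
  have hAg : A ⊆ Set.range g := fun y hy => by
    obtain ⟨x, rfl⟩ := hA hy
    exact ⟨x, QuotientAddGroup.kerLift_mk f x⟩
  have hfg : f ⁻¹' A = QuotientAddGroup.mk ⁻¹' (g ⁻¹' A) := rfl
  rw [hfg, Nat.card_congr (QuotientAddGroup.preimageMkEquivAddSubgroupProdSet _ _),
    Nat.card_prod, Nat.card_preimage_of_injective (QuotientAddGroup.kerLift_injective f) hAg,
    mul_comm]

lemma card_periods_preimage (f : G →+ G') {X : Set G'} (hX : (X ∩ Set.range f).Nonempty) :
    Nat.card (periods (f ⁻¹' X)) = Nat.card (periods (X ∩ Set.range f)) * Nat.card f.ker := by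
  rw [periods_preimage, f.card_preimage_of_subset_range]
  exact periods_subset_of_subset (H := f.range) Set.inter_subset_right hX

lemma IsTiling.inter_nonempty_of_subset {U V : Set G} (hT : IsTiling U V) {H : AddSubgroup G}
    (hU : U ⊆ H) : (V ∩ H).Nonempty := by
  obtain ⟨⟨x, y⟩, ⟨hx, hy, hxy⟩, -⟩ := hT 0
  have hyx : y = -x := eq_neg_of_add_eq_zero_right hxy
  exact ⟨y, hy, hyx ▸ H.neg_mem (hU hx)⟩

end Periods

section Kernel

variable {F : Type*} [Field F] {S : Type*} [AddCommGroup S] [Module F S]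

variable (F) in
def kerSubmodule (X : Set S) : Submodule F S where
  carrier := kerSet F X
  add_mem' h₁ h₂ a := by
    rw [smul_add]
    exact add_mem_periods (h₁ a) (h₂ a)
  zero_mem' a := by
    rw [smul_zero]
    exact zero_mem_periods X
  smul_mem' b _ hw a := by
    rw [smul_smul]
    exact hw (a * b)

lemma kerDim_eq_finrank (X : Set S) : kerDim F X = Module.finrank F (kerSubmodule F X) := by
  rw [kerDim, show kerSet F X = kerSubmodule F X from rfl, Submodule.span_eq]

lemma kerSubmodule_le_of_periods_subset {X : Set S} {p : Submodule F S}
    (hX : periods X ⊆ p) : kerSubmodule F X ≤ p :=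
  fun w hw => hX (by simpa using hw 1)

variable {M : Type*} [AddCommGroup M] [Module F M]

lemma kerSubmodule_preimage (h : M →ₗ[F] S) (X : Set S) :
    kerSubmodule F (h ⁻¹' X) = (kerSubmodule F (X ∩ Set.range h)).comap h := by
  have hper := periods_preimage h.toAddMonoidHom X
  simp only [LinearMap.toAddMonoidHom_coe] at hper
  ext w
  show (∀ a : F, a • w ∈ periods (h ⁻¹' X)) ↔ ∀ a : F, a • h w ∈ periods (X ∩ Set.range h)
  simp only [hper, Set.mem_preimage, map_smul]

lemma LinearMap.finrank_comap_of_le_range [FiniteDimensional F M] (h : M →ₗ[F] S)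
    {p : Submodule F S} (hp : p ≤ LinearMap.range h) :
    Module.finrank F (p.comap h) = Module.finrank F p + Module.finrank F (LinearMap.ker h) := by
  have hker : LinearMap.ker h ≤ p.comap h := LinearMap.ker_le_comap h
  have := LinearMap.finrank_range_add_finrank_ker (h.domRestrict (p.comap h))
  rwa [LinearMap.range_domRestrict, Submodule.map_comap_eq, inf_eq_right.mpr hp,
    LinearMap.ker_domRestrict,
    (Submodule.comapSubtypeEquivOfLe hker).finrank_eq, eq_comm] at this

lemma kerDim_preimage [FiniteDimensional F M] (h : M →ₗ[F] S) {X : Set S}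
    (hX : (X ∩ Set.range h).Nonempty) :
    kerDim F (h ⁻¹' X) = kerDim F (X ∩ Set.range h) + Module.finrank F (LinearMap.ker h) := by
  rw [kerDim_eq_finrank, kerDim_eq_finrank, kerSubmodule_preimage, h.finrank_comap_of_le_range]
  exact kerSubmodule_le_of_periods_subset
    (periods_subset_of_subset (H := (LinearMap.range h).toAddSubgroup) Set.inter_subset_right hX)

end Kernel

lemma Submodule.span_iUnion_range_smul {R M ι : Type*} [Semiring R] [AddCommMonoid M]
    [Module R M] (u : ι → M) :
    span R (⋃ i, Set.range fun a : R => a • u i) = span R (Set.range u) := by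
  simp_rw [← Submodule.span_singleton_eq_range, Submodule.span_iUnion, Submodule.span_eq,
    Submodule.span_range_eq_iSup]

theorem statement2_general {F : Type*} [Field F] [Fintype F] {S : Type*} [AddCommGroup S] [Module F S]
    (U V : Set S) (hT : IsTiling U V)
    {N : ℕ} (u : Fin N → S)
    (hU : U = ⋃ i, Set.range (fun a : F => a • u i))
    (C : Set (Fin N → F)) (hC : C = {c | (∑ i, c i • u i) ∈ V})
    (W : Submodule F S) (hW : W = Submodule.span F U)
    (r : ℕ) (hr : r = Module.finrank F W)
    (VU : Set S) (hVU : VU = V ∩ (W : Set S)) :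
    kerDim F C = kerDim F VU + (N - r) ∧
      Nat.card (periods C) = Nat.card (periods VU) * Fintype.card F ^ (N - r) := by
  set h : (Fin N → F) →ₗ[F] S := Fintype.linearCombination F u
  have hWh : W = LinearMap.range h := by
    rw [hW, hU, Submodule.span_iUnion_range_smul, Fintype.range_linearCombination]
  have hC' : C = h ⁻¹' V := hC
  have hVU' : VU = V ∩ Set.range h := by rw [hVU, hWh, LinearMap.coe_range]
  have hne : (V ∩ Set.range h).Nonempty := by
    rw [← LinearMap.coe_range, ← hWh]
    exact hT.inter_nonempty_of_subset (H := W.toAddSubgroup) (hW ▸ Submodule.subset_span)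
  have hnullity : Module.finrank F (LinearMap.ker h) = N - r := by
    have := h.finrank_range_add_finrank_ker
    rw [Module.finrank_fin_fun, ← hWh, ← hr] at this
    omega
  have hcard_ker : Nat.card h.toAddMonoidHom.ker = Fintype.card F ^ (N - r) := by
    rw [← hnullity, ← Nat.card_eq_fintype_card, ← Module.natCard_eq_pow_finrank]
    rfl
  have hcard := card_periods_preimage h.toAddMonoidHom hne
  simp only [LinearMap.toAddMonoidHom_coe] at hcard
  subst hC' hVU'
  exact ⟨by rw [kerDim_preimage h hne, hnullity], by rw [hcard, hcard_ker]⟩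

theorem statement2 {F : Type*} [Field F] [Fintype F] {S : Type*} [AddCommGroup S] [Module F S]
    (U V : Set S) (hT : IsTiling U V) (hproj : IsProjective F U)
    {N : ℕ} (u : Fin N → S) (hu0 : ∀ i, u i ≠ 0)
    (hcol : ∀ i j : Fin N, i ≠ j → ∀ a : F, u i ≠ a • u j)
    (hU : U = ⋃ i, Set.range (fun a : F => a • u i))
    (C : Set (Fin N → F)) (hC : C = {c | (∑ i, c i • u i) ∈ V})
    (W : Submodule F S) (hW : W = Submodule.span F U)
    (r : ℕ) (hr : r = Module.finrank F W)
    (VU : Set S) (hVU : VU = V ∩ (W : Set S)) :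
    kerDim F C = kerDim F VU + (N - r) ∧
      Nat.card (periods C) = Nat.card (periods VU) * Fintype.card F ^ (N - r) :=
  statement2_general U V hT u hU C hC W hW r hr VU hVU
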